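/- arXiv:2502.12496 — 7 statements merged into one kernel-verified Lean document; each statement's English description precedes it below -/
import Mathlib

section
/- For nonnegative integers ν, w, u with w ≥ 1, the Stirling numbers of the second kind satisfy ∑_{m=u}^{ν+1−w} C(ν,m) S(ν−m+1, w) S(m, u) = C(w+u−1, w−1) S(ν+1, w+u). -/
open Finset

/-- Stirling numbers of the second kind. -/
def stirling : ℕ → ℕ → ℕ
  | 0, 0 => 1
  | 0, _ + 1 => 0
  | _ + 1, 0 => 0
  | n + 1, k + 1 => (k + 1) * stirling n (k + 1) + stirling n k

/-! Expanding `S(ν-m+1, w) = w S(ν-m, w) + S(ν-m, w-1)` splits the sum into two binomial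
convolutions `∑ C(n,m) S(n-m,w) S(m,u) = C(w+u,w) S(n,w+u)`; the identity
`w C(w+u,w) = (w+u) C(w+u-1,w-1)` and the recurrence for `S(ν+1, w+u)` recombine them.
The convolution is proved by induction on `n`: Leibniz's rule writes the sum at `n+1` as two
shifted sums at `n`, and each of those is the left-hand side of the theorem, which the first
argument evaluates using the convolution at `n`. -/

open Nat Finset.Nat

theorem stirling_eq_stirlingSecond : stirling = stirlingSecond := by
  funext n k
  induction n generalizing k with
  | zero => cases k <;> rfl
  | succ n ih =>
    cases k with
    | zero => rfl
    | succ k => rw [stirling, stirlingSecond_succ_succ, ih, ih]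

theorem sum_antidiagonal_choose_mul_stirlingSecond_zero_left (n u : ℕ) :
    ∑ ij ∈ antidiagonal n, n.choose ij.1 * stirlingSecond ij.2 0 * stirlingSecond ij.1 u
      = stirlingSecond n u := by
  rw [sum_eq_single (n, 0)]
  · simp
  · rintro ⟨i, j⟩ hij hne
    cases j with
    | zero => simp_all
    | succ j => simp
  · simp

theorem sum_antidiagonal_choose_mul_stirlingSecond_zero_right (n w : ℕ) :
    ∑ ij ∈ antidiagonal n, n.choose ij.1 * stirlingSecond ij.2 w * stirlingSecond ij.1 0
      = stirlingSecond n w := by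
  rw [sum_eq_single (0, n)]
  · simp
  · rintro ⟨i, j⟩ hij hne
    cases i with
    | zero => simp_all
    | succ i => simp
  · simp

-- Stated for a single `n`, so that it also serves the inductive step proving its hypothesis.
theorem sum_antidiagonal_choose_mul_stirlingSecond_succ_succ {n : ℕ}
    (hn : ∀ w u, ∑ ij ∈ antidiagonal n,
        n.choose ij.1 * stirlingSecond ij.2 w * stirlingSecond ij.1 u
      = (w + u).choose w * stirlingSecond n (w + u)) (w u : ℕ) :
    ∑ ij ∈ antidiagonal n,
        n.choose ij.1 * stirlingSecond (ij.2 + 1) (w + 1) * stirlingSecond ij.1 u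
      = (w + u).choose w * stirlingSecond (n + 1) (w + u + 1) := by
  have hsplit : ∀ ij ∈ antidiagonal n,
      n.choose ij.1 * stirlingSecond (ij.2 + 1) (w + 1) * stirlingSecond ij.1 u
        = (w + 1) * (n.choose ij.1 * stirlingSecond ij.2 (w + 1) * stirlingSecond ij.1 u)
          + n.choose ij.1 * stirlingSecond ij.2 w * stirlingSecond ij.1 u := fun ij _ => by
    rw [stirlingSecond_succ_succ]; ring
  have hchoose := add_one_mul_choose_eq (w + u) w
  rw [sum_congr rfl hsplit, sum_add_distrib, ← mul_sum, hn, hn, stirlingSecond_succ_succ,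
    add_right_comm w 1 u]
  linear_combination stirlingSecond n (w + u + 1) * hchoose.symm

theorem sum_antidiagonal_choose_mul_stirlingSecond (n w u : ℕ) :
    ∑ ij ∈ antidiagonal n, n.choose ij.1 * stirlingSecond ij.2 w * stirlingSecond ij.1 u
      = (w + u).choose w * stirlingSecond n (w + u) := by
  induction n generalizing w u with
  | zero => cases w <;> cases u <;> simp [← add_assoc]
  | succ n ih =>
    rcases w with _ | w
    · simpa using sum_antidiagonal_choose_mul_stirlingSecond_zero_left (n + 1) u
    rcases u with _ | u
    · simpa using sum_antidiagonal_choose_mul_stirlingSecond_zero_right (n + 1) (w + 1)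
    have hshift := sum_antidiagonal_choose_mul_stirlingSecond_succ_succ ih
    have hleibniz := sum_antidiagonal_choose_succ_mul
      (fun i j => stirlingSecond j (w + 1) * stirlingSecond i (u + 1)) n
    have hswap : ∑ ij ∈ antidiagonal n,
        n.choose ij.2 * stirlingSecond ij.2 (w + 1) * stirlingSecond (ij.1 + 1) (u + 1)
          = ∑ ij ∈ antidiagonal n,
            n.choose ij.1 * stirlingSecond (ij.2 + 1) (u + 1) * stirlingSecond ij.1 (w + 1) := by
      rw [← sum_antidiagonal_swap]
      exact sum_congr rfl fun ij _ => by simp only [Prod.fst_swap, Prod.snd_swap]; ring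
    simp only [Nat.cast_id, ← mul_assoc] at hleibniz
    have hpascal : (w + (u + 1)).choose w + (u + (w + 1)).choose u
        = (w + 1 + (u + 1)).choose (w + 1) := by
      rw [choose_symm_add (a := u), show u + (w + 1) = w + u + 1 by ring,
        show w + (u + 1) = w + u + 1 by ring, show w + 1 + (u + 1) = w + u + 1 + 1 by ring,
        choose_succ_succ' (w + u + 1) w]
    rw [hleibniz, hswap, hshift, hshift, ← hpascal, add_mul,
      show w + (u + 1) + 1 = w + 1 + (u + 1) by ring,
      show u + (w + 1) + 1 = w + 1 + (u + 1) by ring]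

/-- `∑_{m=u}^{ν+1−w} C(ν,m) S(ν−m+1, w) S(m, u) = C(w+u−1, w−1) S(ν+1, w+u)` for `w ≥ 1`. -/
theorem stirling_vandermonde_shifted (ν w u : ℕ) (hw : 1 ≤ w) :
    ∑ m ∈ Finset.Icc u (ν + 1 - w),
        ν.choose m * stirling (ν - m + 1) w * stirling m u
      = (w + u - 1).choose (w - 1) * stirling (ν + 1) (w + u) := by
  obtain ⟨w, rfl⟩ := Nat.exists_eq_add_of_le' hw
  have hsupport : ∑ m ∈ Icc u (ν - w), ν.choose m * stirlingSecond (ν - m + 1) (w + 1)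
        * stirlingSecond m u
      = ∑ m ∈ range (ν + 1), ν.choose m * stirlingSecond (ν - m + 1) (w + 1)
        * stirlingSecond m u := by
    refine sum_subset (fun m hm => by simp at hm ⊢; omega) fun m hm hm' => ?_
    simp only [mem_range, mem_Icc, not_and_or, not_le] at hm hm'
    rcases hm' with hmu | hwm
    · rw [stirlingSecond_eq_zero_of_lt hmu, mul_zero]
    · rw [stirlingSecond_eq_zero_of_lt (show ν - m + 1 < w + 1 by omega), mul_zero, zero_mul]
  rw [stirling_eq_stirlingSecond, Nat.add_sub_add_right, add_right_comm w 1 u,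
    add_tsub_cancel_right, add_tsub_cancel_right, hsupport,
    ← sum_antidiagonal_choose_mul_stirlingSecond_succ_succ
      (sum_antidiagonal_choose_mul_stirlingSecond ν), sum_antidiagonal_eq_sum_range_succ_mk]
end

section
/- For any finitely supported multiindex ν ∈ ℕ_0^s, ∑_{m ≤ ν} (∏_j C(ν_j, m_j)) · |m|! · |ν − m|! = (|ν| + 1)!, where |m| = ∑_j m_j and the sum is over all multiindices m with m_j ≤ ν_j for each j. -/
/-!
Group the multiindices `m ≤ ν` by `k = |m|`. Comparing coefficients of `X^k` in
`(X + 1)^|ν| = ∏ⱼ (X + 1)^νⱼ` gives the multivariate Vandermonde identity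
`∑_{|m| = k} C(ν, m) = C(|ν|, k)`, so each of the `|ν| + 1` fibres contributes
`C(|ν|, k) · k! · (|ν| - k)! = |ν|!`.
-/

open Finset Polynomial

theorem Polynomial.X_add_one_pow_eq_sum (n : ℕ) :
    (X + 1 : ℕ[X]) ^ n = ∑ t ∈ Iic n, C (n.choose t) * X ^ t := by
  ext k
  simp only [coeff_X_add_one_pow, Nat.cast_id, finsetSum_coeff, coeff_C_mul_X_pow]
  rw [sum_ite_eq]
  split_ifs with hk
  · rfl
  · exact Nat.choose_eq_zero_of_lt (by simpa using hk)

section Multiindex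

variable {ι : Type*} [Fintype ι] [DecidableEq ι]

theorem Polynomial.X_add_one_pow_sum_eq (ν : ι → ℕ) :
    (X + 1 : ℕ[X]) ^ (∑ j, ν j) = ∑ m ∈ Iic ν, C (∏ j, (ν j).choose (m j)) * X ^ (∑ j, m j) := by
  simp_rw [← prod_pow_eq_pow_sum, X_add_one_pow_eq_sum, prod_univ_sum, prod_mul_distrib,
    ← map_prod, prod_pow_eq_pow_sum]
  rfl

theorem Finset.sum_filter_prod_choose_eq_choose_sum (ν : ι → ℕ) (k : ℕ) :
    ∑ m ∈ (Iic ν).filter (fun m => ∑ j, m j = k), ∏ j, (ν j).choose (m j)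
      = (∑ j, ν j).choose k := by
  have hcoeff := congrArg (coeff · k) (X_add_one_pow_sum_eq ν)
  simp only [coeff_X_add_one_pow, Nat.cast_id, finsetSum_coeff, coeff_C_mul_X_pow] at hcoeff
  rw [hcoeff, sum_filter]
  exact sum_congr rfl fun m _ => if_congr eq_comm rfl rfl

end Multiindex

/-- `∑_{m ≤ ν} C(ν,m)·|m|!·|ν−m|! = (|ν|+1)!` for any multiindex `ν ∈ ℕ₀^s`. -/
theorem sum_choose_factorial_mul_factorial {s : ℕ} (ν : Fin s → ℕ) :
    ∑ m ∈ Finset.Iic ν,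
        (∏ j, (ν j).choose (m j)) * (∑ j, m j).factorial * (∑ j, (ν j - m j)).factorial
      = ((∑ j, ν j) + 1).factorial := by
  set n := ∑ j, ν j
  have sum_mem_range {m} (hm : m ∈ Iic ν) : ∑ j, m j ∈ range (n + 1) :=
    mem_range.2 (Nat.lt_succ_of_le (sum_le_sum fun j _ => mem_Iic.1 hm j))
  have fiber {k} (hk : k ∈ range (n + 1)) :
      ∑ m ∈ (Iic ν).filter (fun m => ∑ j, m j = k),
        (∏ j, (ν j).choose (m j)) * (∑ j, m j).factorial * (n - ∑ j, m j).factorial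
        = n.factorial := by
    rw [sum_congr rfl fun m hm => by rw [(mem_filter.1 hm).2, mul_assoc], ← sum_mul,
      sum_filter_prod_choose_eq_choose_sum, ← mul_assoc,
      Nat.choose_mul_factorial_mul_factorial (Nat.lt_succ_iff.1 (mem_range.1 hk))]
  calc _ = ∑ m ∈ Iic ν,
          (∏ j, (ν j).choose (m j)) * (∑ j, m j).factorial * (n - ∑ j, m j).factorial :=
        sum_congr rfl fun m hm => by rw [sum_tsub_distrib _ fun j _ => mem_Iic.1 hm j]
    _ = ∑ k ∈ range (n + 1), n.factorial := by
        rw [← sum_fiberwise_of_maps_to fun m hm => sum_mem_range hm]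
        exact sum_congr rfl fun k hk => fiber hk
    _ = (n + 1).factorial := by rw [sum_const, card_range, smul_eq_mul, Nat.factorial_succ]
end

section
/- The n-th derivative of the logistic sigmoid function σ(x) = 1/(1+e^{−x}) satisfies, for every n ≥ 1 and all real x, σ^{(n)}(x) = ∑_{k=1}^{n} (−1)^{k−1} E(n, k−1) σ(x)^k (1−σ(x))^{n+1−k}, where E(n,k) = ∑_{i=0}^{k} (−1)^i C(n+1, i)(k+1−i)^n is the Eulerian number. -/
/-!
Since `σ' = σ (1 - σ)`, every derivative of `σ` is a polynomial in `σ`: `σ⁽ⁿ⁾ = Pₙ ∘ σ`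
with `P₀ s = s` and `Pₙ₊₁ s = s (1 - s) Pₙ' s`. Writing
`Pₙ s = ∑_{j ≤ n} (-1)^j E(n,j) s^(j+1) (1-s)^(n-j)`, the step `n → n + 1` is the Eulerian
recurrence `E(n+1,m+1) = (m+2) E(n,m+1) + (n-m) E(n,m)`, which follows from the alternating-sum
definition by Pascal's rule and absorption. The recurrence also gives `E(n,k) = 0` for `n ≤ k`,
`k ≠ 0`; in particular the top term `j = n` vanishes for `n ≥ 1`, leaving the stated sum.
-/

open Finset Real

/-- The logistic sigmoid function. -/
noncomputable def sigmoid (x : ℝ) : ℝ := 1 / (1 + Real.exp (-x))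

/-- Eulerian numbers `E(n,k) = ∑_{i=0}^{k} (−1)^i C(n+1, i)(k+1−i)^n` (as reals). -/
noncomputable def eulerian (n k : ℕ) : ℝ :=
  ∑ i ∈ Finset.range (k + 1), (-1 : ℝ) ^ i * ((n + 1).choose i : ℝ) * ((k + 1 - i : ℕ) : ℝ) ^ n

theorem Nat.cast_choose_mul_succ_eq {R : Type*} [CommRing R] (n k : ℕ) :
    (n.choose k : R) * (n + 1) = ((n + 1).choose k : R) * (n + 1 - k) := by
  rcases le_or_gt k (n + 1) with hk | hk
  · have h := congrArg (Nat.cast : ℕ → R) (Nat.choose_mul_succ_eq n k)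
    push_cast [Nat.cast_sub hk] at h
    exact h
  · simp [Nat.choose_eq_zero_of_lt hk, Nat.choose_eq_zero_of_lt (Nat.lt_of_succ_lt hk)]

section AlternatingBinomialSums

variable (n m : ℕ) (f : ℕ → ℝ)

theorem sum_range_neg_one_pow_mul_choose_succ_succ :
    ∑ i ∈ range (m + 2), (-1 : ℝ) ^ i * ((n + 2).choose i : ℝ) * f i
      = ∑ i ∈ range (m + 2), (-1 : ℝ) ^ i * ((n + 1).choose i : ℝ) * f i
        - ∑ i ∈ range (m + 1), (-1 : ℝ) ^ i * ((n + 1).choose i : ℝ) * f (i + 1) := by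
  rw [sum_range_succ', sum_range_succ' _ (m + 1), sub_eq_add_neg, ← sum_neg_distrib,
    add_right_comm, ← sum_add_distrib]
  simp only [Nat.choose_succ_succ (n + 1), Nat.choose_zero_right]
  push_cast
  congr 1
  refine sum_congr rfl fun i _ => ?_
  ring

theorem sum_range_mul_neg_one_pow_mul_choose :
    ∑ i ∈ range (m + 2), (i : ℝ) * ((-1 : ℝ) ^ i * ((n + 1).choose i : ℝ) * f i)
      = -((n : ℝ) + 1) *
          ∑ i ∈ range (m + 1), (-1 : ℝ) ^ i * (n.choose i : ℝ) * f (i + 1) := by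
  rw [sum_range_succ', mul_sum]
  simp only [Nat.cast_zero, zero_mul, add_zero]
  refine sum_congr rfl fun i _ => ?_
  have h := congrArg (Nat.cast : ℕ → ℝ) (Nat.add_one_mul_choose_eq n i)
  push_cast at h ⊢
  linear_combination (-1 : ℝ) ^ i * f (i + 1) * h

end AlternatingBinomialSums

theorem eulerian_eq_sum (n k : ℕ) :
    eulerian n k =
      ∑ i ∈ range (k + 1), (-1 : ℝ) ^ i * ((n + 1).choose i : ℝ) * ((k : ℝ) + 1 - i) ^ n :=
  sum_congr rfl fun i hi => by
    rw [Nat.cast_sub (mem_range_succ_iff.mp hi |>.trans (Nat.le_succ k))]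
    push_cast; rfl

@[simp]
theorem eulerian_zero_right (n : ℕ) : eulerian n 0 = 1 := by simp [eulerian]

theorem eulerian_succ_succ (n m : ℕ) :
    eulerian (n + 1) (m + 1) =
      ((m : ℝ) + 2) * eulerian n (m + 1) + ((n : ℝ) - m) * eulerian n m := by
  simp only [eulerian_eq_sum, Nat.cast_add, Nat.cast_one]
  set g : ℕ → ℝ := fun i => (m : ℝ) + 1 + 1 - i with hg
  rw [sum_range_neg_one_pow_mul_choose_succ_succ n m (fun i => g i ^ (n + 1))]
  have hsplit : ∑ i ∈ range (m + 2), (-1 : ℝ) ^ i * ((n + 1).choose i : ℝ) * g i ^ (n + 1)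
      = ((m : ℝ) + 2) * ∑ i ∈ range (m + 2), (-1 : ℝ) ^ i * ((n + 1).choose i : ℝ) * g i ^ n
        - ∑ i ∈ range (m + 2), (i : ℝ) * ((-1 : ℝ) ^ i * ((n + 1).choose i : ℝ) * g i ^ n) := by
    rw [mul_sum, ← sum_sub_distrib]
    exact sum_congr rfl fun i _ => by rw [hg]; ring
  rw [hsplit, sum_range_mul_neg_one_pow_mul_choose n m (fun i => g i ^ n)]
  suffices h : ((n : ℝ) + 1) * ∑ i ∈ range (m + 1), (-1 : ℝ) ^ i * (n.choose i : ℝ) * g (i + 1) ^ n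
      - ∑ i ∈ range (m + 1), (-1 : ℝ) ^ i * ((n + 1).choose i : ℝ) * g (i + 1) ^ (n + 1)
      = ((n : ℝ) - m) *
          ∑ i ∈ range (m + 1), (-1 : ℝ) ^ i * ((n + 1).choose i : ℝ) * ((m : ℝ) + 1 - i) ^ n by
    linear_combination h
  rw [mul_sum, mul_sum, ← sum_sub_distrib]
  refine sum_congr rfl fun i _ => ?_
  have hg1 : g (i + 1) = (m : ℝ) + 1 - i := by rw [hg]; push_cast; ring
  rw [hg1]
  linear_combination (-1 : ℝ) ^ i * ((m : ℝ) + 1 - i) ^ n * Nat.cast_choose_mul_succ_eq (R := ℝ) n i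

theorem eulerian_zero_left {k : ℕ} (hk : 0 < k) : eulerian 0 k = 0 := by
  obtain ⟨k, rfl⟩ := Nat.exists_eq_add_of_le' hk
  simp [eulerian, sum_range_succ', Nat.choose_eq_zero_of_lt]

theorem eulerian_eq_zero {n k : ℕ} (hnk : n ≤ k) (hk : 0 < k) : eulerian n k = 0 := by
  induction n generalizing k with
  | zero => exact eulerian_zero_left hk
  | succ n ih =>
    obtain ⟨m, rfl⟩ := Nat.exists_eq_add_of_le' hk
    have hm : ((n : ℝ) - m) * eulerian n m = 0 := by
      rcases m.eq_zero_or_pos with rfl | hm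
      · simp [Nat.le_zero.mp (Nat.le_of_succ_le_succ hnk)]
      · rw [ih (by omega) hm, mul_zero]
    rw [eulerian_succ_succ, ih (by omega) m.succ_pos, hm]
    ring

noncomputable def sigmoidDerivPoly (n : ℕ) (s : ℝ) : ℝ :=
  ∑ j ∈ range (n + 1), (-1 : ℝ) ^ j * eulerian n j * s ^ (j + 1) * (1 - s) ^ (n - j)

theorem sigmoidDerivPoly_zero (s : ℝ) : sigmoidDerivPoly 0 s = s := by
  simp [sigmoidDerivPoly]

theorem sigmoidDerivPoly_succ (n : ℕ) (s : ℝ) :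
    sigmoidDerivPoly (n + 1) s = ∑ j ∈ range (n + 1), (-1 : ℝ) ^ j * eulerian n j *
      (((j : ℝ) + 1) * s ^ (j + 1) * (1 - s) ^ (n - j + 1)
        - ((n : ℝ) - j) * s ^ (j + 2) * (1 - s) ^ (n - j)) := by
  have hfirst : ∑ j ∈ range (n + 1),
        (-1 : ℝ) ^ j * eulerian n j * ((j : ℝ) + 1) * s ^ (j + 1) * (1 - s) ^ (n - j + 1)
      = s * (1 - s) ^ (n + 1) + ∑ j ∈ range (n + 1),
          (-1 : ℝ) ^ (j + 1) * eulerian n (j + 1) * ((j : ℝ) + 2) * s ^ (j + 2)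
            * (1 - s) ^ (n - j) := by
    rw [sum_range_succ', sum_range_succ _ n, eulerian_eq_zero n.le_succ n.succ_pos]
    have hshift (k : ℕ) (hk : k ∈ range n) :
        (-1 : ℝ) ^ (k + 1) * eulerian n (k + 1) * ((k + 1 : ℕ) + 1) * s ^ (k + 1 + 1)
            * (1 - s) ^ (n - (k + 1) + 1)
          = (-1) ^ (k + 1) * eulerian n (k + 1) * ((k : ℝ) + 2) * s ^ (k + 2)
            * (1 - s) ^ (n - k) := by
      rw [show n - (k + 1) + 1 = n - k by rw [mem_range] at hk; omega]
      push_cast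
      ring
    rw [sum_congr rfl hshift]
    simp [add_comm]
  calc sigmoidDerivPoly (n + 1) s
      = s * (1 - s) ^ (n + 1)
        + ∑ j ∈ range (n + 1),
          (-1 : ℝ) ^ (j + 1) * eulerian n (j + 1) * ((j : ℝ) + 2) * s ^ (j + 2) * (1 - s) ^ (n - j)
        - ∑ j ∈ range (n + 1),
          (-1 : ℝ) ^ j * eulerian n j * ((n : ℝ) - j) * s ^ (j + 2) * (1 - s) ^ (n - j) := by
        rw [sigmoidDerivPoly, sum_range_succ', add_sub_assoc, ← sum_sub_distrib, add_comm]
        simp only [eulerian_succ_succ, eulerian_zero_right, Nat.add_sub_add_right]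
        congr 1
        · simp
        · exact sum_congr rfl fun j _ => by ring
    _ = ∑ j ∈ range (n + 1),
          (-1 : ℝ) ^ j * eulerian n j * ((j : ℝ) + 1) * s ^ (j + 1) * (1 - s) ^ (n - j + 1)
        - ∑ j ∈ range (n + 1),
          (-1 : ℝ) ^ j * eulerian n j * ((n : ℝ) - j) * s ^ (j + 2) * (1 - s) ^ (n - j) := by
        rw [hfirst]
    _ = _ := by
        rw [← sum_sub_distrib]
        exact sum_congr rfl fun j _ => by ring

theorem sigmoid_eq_real_sigmoid : _root_.sigmoid = Real.sigmoid :=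
  funext fun _ => one_div _

section LogisticODE

variable {f : ℝ → ℝ} {x : ℝ}

theorem HasDerivAt.pow_succ_mul_one_sub_pow (hf : HasDerivAt f (f x * (1 - f x)) x) (p q : ℕ) :
    HasDerivAt (fun y => f y ^ (p + 1) * (1 - f y) ^ q)
      (((p : ℝ) + 1) * f x ^ (p + 1) * (1 - f x) ^ (q + 1) - q * f x ^ (p + 2) * (1 - f x) ^ q)
      x := by
  have hpow := hf.fun_pow (p + 1)
  have hsub := (hf.const_sub 1).fun_pow q
  refine (hpow.mul hsub).congr_deriv ?_
  rcases q with _ | q <;> push_cast <;> ring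

theorem HasDerivAt.sigmoidDerivPoly_comp (hf : HasDerivAt f (f x * (1 - f x)) x) (n : ℕ) :
    HasDerivAt (fun y => sigmoidDerivPoly n (f y)) (sigmoidDerivPoly (n + 1) (f x)) x := by
  rw [sigmoidDerivPoly_succ]
  refine HasDerivAt.fun_sum fun j hj => ?_
  have hjn : j ≤ n := mem_range_succ_iff.mp hj
  simpa only [mul_assoc, Nat.cast_sub hjn] using
    (hf.pow_succ_mul_one_sub_pow j (n - j)).const_mul ((-1 : ℝ) ^ j * eulerian n j)

end LogisticODE

theorem iteratedDeriv_sigmoid_eq_sigmoidDerivPoly (n : ℕ) (x : ℝ) :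
    iteratedDeriv n _root_.sigmoid x = sigmoidDerivPoly n (_root_.sigmoid x) := by
  induction n generalizing x with
  | zero => rw [iteratedDeriv_zero, sigmoidDerivPoly_zero]
  | succ n ih =>
    have hσ : HasDerivAt _root_.sigmoid (_root_.sigmoid x * (1 - _root_.sigmoid x)) x := by
      rw [sigmoid_eq_real_sigmoid]; exact Real.hasDerivAt_sigmoid x
    rw [iteratedDeriv_succ, funext ih, (hσ.sigmoidDerivPoly_comp n).deriv]

theorem sigmoidDerivPoly_eq_sum_Icc {n : ℕ} (hn : 1 ≤ n) (s : ℝ) :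
    sigmoidDerivPoly n s =
      ∑ k ∈ Icc 1 n, (-1 : ℝ) ^ (k - 1) * eulerian n (k - 1) * s ^ k * (1 - s) ^ (n + 1 - k) := by
  rw [sigmoidDerivPoly, sum_range_succ, eulerian_eq_zero le_rfl hn, ← Ico_add_one_right_eq_Icc,
    ← sum_Ico_add' _ 0 n 1, ← range_eq_Ico]
  simp

/-- For every `n ≥ 1` and all real `x`,
`σ^{(n)}(x) = ∑_{k=1}^{n} (−1)^{k−1} E(n, k−1) σ(x)^k (1−σ(x))^{n+1−k}`. -/
theorem iteratedDeriv_sigmoid (n : ℕ) (hn : 1 ≤ n) (x : ℝ) :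
    iteratedDeriv n _root_.sigmoid x
      = ∑ k ∈ Finset.Icc 1 n,
          (-1 : ℝ) ^ (k - 1) * eulerian n (k - 1) * _root_.sigmoid x ^ k
            * (1 - _root_.sigmoid x) ^ (n + 1 - k) := by
  rw [iteratedDeriv_sigmoid_eq_sigmoidDerivPoly, sigmoidDerivPoly_eq_sum_Icc hn]
end

section
/- For every n ≥ 1, the n-th derivative of the logistic sigmoid σ(x) = 1/(1+e^{−x}) satisfies |σ^{(n)}(x)| ≤ n! for all real x. -/
/-!
The sigmoid extends to the holomorphic function `z ↦ (1 + e^{-z})⁻¹`. On the strip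
`|Im z| < π/2` the real part of `e^{-z}` is positive, so `|1 + e^{-z}| > 1` and the extension is
holomorphic and bounded by `1` there. Every disc of radius `1` centred on the real axis lies in
this strip, so Cauchy's estimate gives `|σ⁽ⁿ⁾(x)| ≤ n! · 1 / 1ⁿ = n!`.
-/

open Real

open Complex Metric

theorem iteratedDeriv_real_of_complex {f : ℝ → ℝ} {F : ℂ → ℂ} {U : Set ℂ} (hU : IsOpen U)
    (hF : DifferentiableOn ℂ F U) (hRU : ∀ x : ℝ, (x : ℂ) ∈ U) (hfF : ∀ x, f x = (F x).re)
    (n : ℕ) (x : ℝ) : iteratedDeriv n f x = (iteratedDeriv n F x).re := by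
  induction n generalizing x with
  | zero => simpa using hfF x
  | succ n ih =>
    have hdiff : DifferentiableAt ℂ (iteratedDeriv n F) x := by
      rw [iteratedDeriv_eq_iterate]
      exact ((hF.analyticOnNhd hU).iterated_deriv n x (hRU x)).differentiableAt
    rw [iteratedDeriv_succ, iteratedDeriv_succ, funext ih]
    exact hdiff.hasDerivAt.real_of_complex.deriv

noncomputable def complexSigmoid (z : ℂ) : ℂ := (1 + cexp (-z))⁻¹

theorem sigmoid_eq_re_complexSigmoid (x : ℝ) : _root_.sigmoid x = (complexSigmoid x).re := by
  rw [← ofReal_re (_root_.sigmoid x)]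
  simp [_root_.sigmoid, complexSigmoid]

theorem re_exp_neg_pos {z : ℂ} (hz : |z.im| < π / 2) : 0 < (cexp (-z)).re := by
  rw [exp_re, neg_re, neg_im, Real.cos_neg]
  exact mul_pos (Real.exp_pos _) (Real.cos_pos_of_mem_Ioo (abs_lt.mp hz))

theorem one_lt_norm_one_add_exp_neg {z : ℂ} (hz : |z.im| < π / 2) : 1 < ‖1 + cexp (-z)‖ :=
  calc (1 : ℝ) < (1 + cexp (-z)).re := by simpa using re_exp_neg_pos hz
    _ ≤ ‖1 + cexp (-z)‖ := re_le_norm _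

theorem norm_complexSigmoid_le_one {z : ℂ} (hz : |z.im| < π / 2) : ‖complexSigmoid z‖ ≤ 1 := by
  rw [complexSigmoid, norm_inv]
  exact inv_le_one_of_one_le₀ (one_lt_norm_one_add_exp_neg hz).le

theorem differentiableOn_complexSigmoid :
    DifferentiableOn ℂ complexSigmoid {z | |z.im| < π / 2} := by
  intro z hz
  have hne : 1 + cexp (-z) ≠ 0 := norm_pos_iff.mp (one_pos.trans (one_lt_norm_one_add_exp_neg hz))
  exact ((differentiableAt_id.neg.cexp.const_add 1).inv hne).differentiableWithinAt

theorem isOpen_abs_im_lt (c : ℝ) : IsOpen {z : ℂ | |z.im| < c} :=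
  isOpen_lt (continuous_abs.comp continuous_im) continuous_const

theorem closedBall_ofReal_subset_abs_im_lt (x : ℝ) {r c : ℝ} (hrc : r < c) :
    closedBall (x : ℂ) r ⊆ {z : ℂ | |z.im| < c} := fun z hz =>
  calc |z.im| = |(z - x).im| := by simp
    _ ≤ ‖z - x‖ := abs_im_le_norm _
    _ < c := (mem_closedBall_iff_norm.mp hz).trans_lt hrc

theorem abs_iteratedDeriv_sigmoid_le_general (n : ℕ) (x : ℝ) :
    |iteratedDeriv n _root_.sigmoid x| ≤ (n.factorial : ℝ) := by
  have hπ : (1 : ℝ) < π / 2 := by linarith [Real.pi_gt_three]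
  calc |iteratedDeriv n _root_.sigmoid x|
      = |(iteratedDeriv n complexSigmoid x).re| := by
        rw [iteratedDeriv_real_of_complex (isOpen_abs_im_lt _) differentiableOn_complexSigmoid
          (fun _ => by simp [pi_pos]) sigmoid_eq_re_complexSigmoid]
    _ ≤ ‖iteratedDeriv n complexSigmoid x‖ := abs_re_le_norm _
    _ ≤ n.factorial * 1 / 1 ^ n :=
        norm_iteratedDeriv_le_of_forall_mem_sphere_norm_le n one_pos
          (differentiableOn_complexSigmoid.diffContOnCl_ball
            (closedBall_ofReal_subset_abs_im_lt x hπ))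
          fun z hz => norm_complexSigmoid_le_one
            (closedBall_ofReal_subset_abs_im_lt x hπ (sphere_subset_closedBall hz))
    _ = n.factorial := by simp

/-- For every `n ≥ 1`, `|σ^{(n)}(x)| ≤ n!` for all real `x`. -/
theorem abs_iteratedDeriv_sigmoid_le (n : ℕ) (hn : 1 ≤ n) (x : ℝ) :
    |iteratedDeriv n _root_.sigmoid x| ≤ (n.factorial : ℝ) :=
  abs_iteratedDeriv_sigmoid_le_general n x
end

section
/- For every integer n ≥ 1 and all real x, the n-th derivative of tanh satisfies |d^n/dx^n tanh(x)| < 2^n · n!. -/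
/-!
Every derivative of `tanh` is a polynomial in `tanh`: with `P₀ = X` and `Pₙ₊₁ = Pₙ' · (1 - X²)`
(from `tanh' = 1 - tanh²`), `tanh⁽ⁿ⁾ = Pₙ ∘ tanh`. For the `ℓ¹` norm of the coefficients,
differentiation multiplies it by at most the degree `n + 1` and multiplication by `1 - X²` at most
doubles it, so `‖Pₙ‖₁ ≤ 2ⁿ n!`. As `|tanh| < 1`, `|Pₙ(tanh x)| ≤ ‖Pₙ‖₁`. The inequality is strict
because in the last step the factor `1 - tanh² x ∈ (0, 1]` costs at most `1` instead of
`‖1 - X²‖₁ = 2`.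
-/

open Polynomial Finset

namespace Polynomial

variable {R : Type*} [SeminormedRing R]

noncomputable def l1Norm (p : R[X]) : ℝ := p.sum fun _ a => ‖a‖

lemma l1Norm_eq_sum_range {p : R[X]} {n : ℕ} (hn : p.natDegree < n) :
    p.l1Norm = ∑ i ∈ range n, ‖p.coeff i‖ :=
  p.sum_over_range' (fun _ => norm_zero) n hn

lemma l1Norm_nonneg (p : R[X]) : 0 ≤ p.l1Norm := by
  rw [l1Norm_eq_sum_range p.natDegree.lt_succ_self]
  positivity

lemma l1Norm_sub_le (p q : R[X]) : (p - q).l1Norm ≤ p.l1Norm + q.l1Norm := by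
  have hp : p.natDegree < max p.natDegree q.natDegree + 1 := by omega
  have hq : q.natDegree < max p.natDegree q.natDegree + 1 := by omega
  have hpq : (p - q).natDegree < max p.natDegree q.natDegree + 1 :=
    Nat.lt_succ_of_le (natDegree_sub_le p q)
  rw [l1Norm_eq_sum_range hp, l1Norm_eq_sum_range hq, l1Norm_eq_sum_range hpq,
    ← sum_add_distrib]
  gcongr with i
  rw [coeff_sub]
  exact norm_sub_le _ _

lemma l1Norm_mul_X_pow (p : R[X]) (k : ℕ) : (p * X ^ k).l1Norm = p.l1Norm := by
  have hdeg : (p * X ^ k).natDegree < k + (p.natDegree + 1) := by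
    have := natDegree_mul_le_of_le le_rfl (natDegree_X_pow_le (R := R) k) (p := p)
    omega
  rw [l1Norm_eq_sum_range hdeg, l1Norm_eq_sum_range p.natDegree.lt_succ_self, sum_range_add]
  have hlow : ∀ i ∈ range k, ‖(p * X ^ k).coeff i‖ = 0 := fun i hi => by
    rw [coeff_mul_X_pow', if_neg (by simpa using hi), norm_zero]
  simp only [sum_eq_zero hlow, add_comm k, coeff_mul_X_pow, zero_add]

lemma l1Norm_derivative_le (p : R[X]) : (derivative p).l1Norm ≤ p.natDegree * p.l1Norm := by
  set d := p.natDegree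
  have hdeg : (derivative p).natDegree < d + 1 :=
    (natDegree_derivative_le p).trans_lt (by omega)
  have hterm : ∀ i ∈ range (d + 1), ‖(derivative p).coeff i‖ ≤ d * ‖p.coeff (i + 1)‖ := by
    intro i _
    rw [coeff_derivative, ← Nat.cast_succ, ← nsmul_eq_mul']
    by_cases hi : i + 1 ≤ d
    · exact norm_nsmul_le.trans (by gcongr)
    · rw [coeff_eq_zero_of_natDegree_lt (by omega)]
      simp
  calc (derivative p).l1Norm
      ≤ ∑ i ∈ range (d + 1), d * ‖p.coeff (i + 1)‖ := by
        rw [l1Norm_eq_sum_range hdeg]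
        exact sum_le_sum hterm
    _ ≤ d * p.l1Norm := by
        rw [← mul_sum, l1Norm_eq_sum_range (by omega : d < d + 2),
          sum_range_succ' (fun i => ‖p.coeff i‖) (d + 1)]
        gcongr
        exact le_add_of_nonneg_right (norm_nonneg _)

lemma norm_eval_le_l1Norm [NormOneClass R] (p : R[X]) {t : R} (ht : ‖t‖ ≤ 1) :
    ‖p.eval t‖ ≤ p.l1Norm := by
  rw [eval_eq_sum_range' p.natDegree.lt_succ_self, l1Norm_eq_sum_range p.natDegree.lt_succ_self]
  refine (norm_sum_le _ _).trans (sum_le_sum fun i _ => ?_)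
  calc ‖p.coeff i * t ^ i‖ ≤ ‖p.coeff i‖ * ‖t‖ ^ i :=
        (norm_mul_le _ _).trans (by gcongr; exact norm_pow_le _ _)
    _ ≤ ‖p.coeff i‖ := mul_le_of_le_one_right (norm_nonneg _) (pow_le_one₀ (norm_nonneg _) ht)

lemma l1Norm_X [NormOneClass R] : (X : R[X]).l1Norm = 1 := by
  rw [l1Norm, sum_X_index norm_zero, norm_one]

end Polynomial

open Real

lemma Real.hasDerivAt_tanh (x : ℝ) : HasDerivAt tanh (1 - tanh x ^ 2) x := by
  have hcosh : cosh x ≠ 0 := (cosh_pos x).ne'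
  have hquot : tanh = fun y => sinh y / cosh y := by ext y; exact tanh_eq_sinh_div_cosh y
  rw [hquot]
  refine ((hasDerivAt_sinh x).div (hasDerivAt_cosh x) hcosh).congr_deriv ?_
  field_simp

noncomputable def tanhDerivPoly : ℕ → ℝ[X]
  | 0 => X
  | n + 1 => derivative (tanhDerivPoly n) * (1 - X ^ 2)

lemma iteratedDeriv_tanh (n : ℕ) :
    iteratedDeriv n tanh = fun x => (tanhDerivPoly n).eval (tanh x) := by
  induction n with
  | zero => simp [tanhDerivPoly]
  | succ n ih =>
    ext x
    rw [iteratedDeriv_succ, ih, tanhDerivPoly]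
    simp only [eval_mul, eval_sub, eval_one, eval_pow, eval_X]
    exact (((tanhDerivPoly n).hasDerivAt (tanh x)).comp x (hasDerivAt_tanh x)).deriv

lemma natDegree_tanhDerivPoly_le (n : ℕ) : (tanhDerivPoly n).natDegree ≤ n + 1 := by
  induction n with
  | zero => simp [tanhDerivPoly]
  | succ n ih =>
    have hquad : (1 - X ^ 2 : ℝ[X]).natDegree ≤ 2 := by compute_degree
    have := natDegree_mul_le_of_le
      ((natDegree_derivative_le _).trans (Nat.sub_le_sub_right ih 1)) hquad
    rw [tanhDerivPoly]
    omega

lemma l1Norm_derivative_tanhDerivPoly_le (n : ℕ) :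
    (derivative (tanhDerivPoly n)).l1Norm ≤ (n + 1) * (tanhDerivPoly n).l1Norm :=
  (l1Norm_derivative_le _).trans <| by
    gcongr
    · exact l1Norm_nonneg _
    · exact_mod_cast natDegree_tanhDerivPoly_le n

lemma l1Norm_tanhDerivPoly_le (n : ℕ) : (tanhDerivPoly n).l1Norm ≤ 2 ^ n * n.factorial := by
  induction n with
  | zero => simp [tanhDerivPoly, l1Norm_X]
  | succ n ih =>
    set q := derivative (tanhDerivPoly n)
    have hq : q.l1Norm ≤ (n + 1) * (2 ^ n * n.factorial) :=
      (l1Norm_derivative_tanhDerivPoly_le n).trans (by gcongr)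
    calc (tanhDerivPoly (n + 1)).l1Norm = (q - q * X ^ 2).l1Norm := by
          rw [tanhDerivPoly, mul_sub, mul_one]
      _ ≤ 2 * q.l1Norm := by
          linarith [l1Norm_sub_le q (q * X ^ 2), l1Norm_mul_X_pow q 2]
      _ ≤ 2 * ((n + 1) * (2 ^ n * n.factorial)) := by gcongr
      _ = 2 ^ (n + 1) * (n + 1).factorial := by
          rw [Nat.factorial_succ]
          push_cast
          ring

theorem abs_iteratedDeriv_tanh_lt_general (n : ℕ) (x : ℝ) :
    |iteratedDeriv n Real.tanh x| < 2 ^ n * (n.factorial : ℝ) := by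
  rcases n with _ | m
  · simpa using abs_tanh_lt_one x
  set q := derivative (tanhDerivPoly m)
  have hsech : 0 ≤ 1 - tanh x ^ 2 ∧ 1 - tanh x ^ 2 ≤ 1 :=
    ⟨sub_nonneg.2 (tanh_sq_lt_one x).le, sub_le_self _ (sq_nonneg _)⟩
  have hq : q.l1Norm ≤ (m + 1) * (2 ^ m * m.factorial) :=
    (l1Norm_derivative_tanhDerivPoly_le m).trans (by gcongr; exact l1Norm_tanhDerivPoly_le m)
  have hpos : (0 : ℝ) < (m + 1) * (2 ^ m * m.factorial) := by positivity
  calc |iteratedDeriv (m + 1) tanh x| = |q.eval (tanh x)| * (1 - tanh x ^ 2) := by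
        simp [iteratedDeriv_tanh, tanhDerivPoly, q, abs_mul, abs_of_nonneg hsech.1]
    _ ≤ q.l1Norm * 1 :=
        mul_le_mul (norm_eval_le_l1Norm q (abs_tanh_lt_one x).le) hsech.2 hsech.1
          (l1Norm_nonneg q)
    _ < 2 * ((m + 1) * (2 ^ m * m.factorial)) := by linarith
    _ = 2 ^ (m + 1) * (m + 1).factorial := by
        rw [Nat.factorial_succ]
        push_cast
        ring

/-- For every `n ≥ 1` and all real `x`, `|d^n/dx^n tanh(x)| < 2^n · n!`. -/
theorem abs_iteratedDeriv_tanh_lt (n : ℕ) (hn : 1 ≤ n) (x : ℝ) :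
    |iteratedDeriv n Real.tanh x| < 2 ^ n * (n.factorial : ℝ) :=
  abs_iteratedDeriv_tanh_lt_general n x
end

section
/- Let A: 𝓘 × ℕ → ℝ≥0 (where 𝓘 is the set of finitely supported multiindices) satisfy A(ν,0) = δ_{ν,0}, A(ν,λ) = 0 for λ > |ν|, and the recursion A(ν+e_j, λ) = R ∑_{m ≤ ν} C(ν,m) β^{ν−m+e_j} Γ_{|ν−m|+1} A(m, λ−1) for all ν ∈ 𝓘, j ≥ 1, 1 ≤ λ ≤ |ν|+1, where R > 0, (β_j) and (Γ_n) are positive sequences. Then for all ν ≠ 0 and 1 ≤ λ ≤ |ν|, A(ν,λ) = R^λ β^ν B(|ν|, λ), where B(n,1) = Γ_n and B(n,λ) = ∑_{i=λ−1}^{n−1} C(n−1,i) Γ_{n−i} B(i, λ−1). -/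
open Finset

/-- The order `|ν| = ∑_j ν_j` of a finitely supported multiindex. -/
def mdeg (ν : ℕ →₀ ℕ) : ℕ := ν.sum fun _ k => k

/-- `β^ν = ∏_j β_j^{ν_j}`. -/
def bpow (β : ℕ → ℝ) (ν : ℕ →₀ ℕ) : ℝ := ν.prod fun j k => β j ^ k

/-- `C(ν,m) = ∏_j C(ν_j, m_j)` for multiindices. -/
def mchoose (ν m : ℕ →₀ ℕ) : ℕ := ∏ j ∈ ν.support, (ν j).choose (m j)

/-- The recursively defined sequence `B(n,λ)`:
`B(n,1) = Γ_n`, `B(n,λ) = ∑_{i=λ−1}^{n−1} C(n−1,i) Γ_{n−i} B(i, λ−1)`. -/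
noncomputable def Bseq (Γ : ℕ → ℝ) : ℕ → ℕ → ℝ
  | _, 0 => 0
  | n, 1 => Γ n
  | n, (l + 2) =>
      ∑ i ∈ Finset.Icc (l + 1) (n - 1), ((n - 1).choose i : ℝ) * Γ (n - i) * Bseq Γ i (l + 1)


/-! Induction on `λ`. Writing `ν = μ + e_j`, the recursion expresses `A(ν, λ+1)` through the
`A(m, λ)` with `m ≤ μ`, and by induction the summand for `m` is `C(μ,m)` times a quantity
depending on `m` only through `|m|` (the powers of `β` combine to `β^ν`). The multi-index
Vandermonde identity `∑_{m ≤ μ, |m| = i} C(μ,m) = C(|μ|,i)`, read off from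
`∑_{m ≤ μ} C(μ,m) x^{|m|} = ∏_j (1+x)^{μ_j} = (1+x)^{|μ|}`, collapses the sum to the recursion
defining `B`. -/

lemma mdeg_eq_degree (ν : ℕ →₀ ℕ) : mdeg ν = ν.degree := rfl

lemma mdeg_tsub {m ν : ℕ →₀ ℕ} (h : m ≤ ν) : mdeg (ν - m) = mdeg ν - mdeg m := by
  have := congrArg Finsupp.degree (tsub_add_cancel_of_le h)
  rw [map_add] at this
  simp only [mdeg_eq_degree]
  omega

lemma bpow_add (β : ℕ → ℝ) (ν μ : ℕ →₀ ℕ) : bpow β (ν + μ) = bpow β ν * bpow β μ :=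
  Finsupp.prod_add_index' (fun _ => pow_zero _) (fun _ _ _ => pow_add _ _ _)

lemma bpow_tsub_add_mul {β : ℕ → ℝ} {m ν : ℕ →₀ ℕ} (h : m ≤ ν) (μ : ℕ →₀ ℕ) :
    bpow β (ν - m + μ) * bpow β m = bpow β (ν + μ) := by
  rw [← bpow_add, add_right_comm, tsub_add_cancel_of_le h]

lemma Finsupp.exists_eq_add_single_one_of_ne_zero {ι : Type*} {ν : ι →₀ ℕ} (hν : ν ≠ 0) :
    ∃ μ j, ν = μ + Finsupp.single j 1 := by
  obtain ⟨j, hj⟩ := Finsupp.support_nonempty_iff.mpr hν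
  exact ⟨_, j, (Finsupp.sub_add_single_one_cancel (Finsupp.mem_support_iff.mp hj)).symm⟩

lemma Finsupp.sum_Iic_prod_eq_prod_sum {ι M : Type*} [DecidableEq ι] [CommSemiring M]
    (ν : ι →₀ ℕ) (f : ι → ℕ → M) :
    ∑ m ∈ Iic ν, ∏ i ∈ ν.support, f i (m i) = ∏ i ∈ ν.support, ∑ k ∈ Iic (ν i), f i k := by
  rw [prod_sum]
  refine sum_bij' (fun m _ i _ => m i) (fun p _ => Finsupp.indicator ν.support p) ?_ ?_ ?_ ?_ ?_
  · intro m hm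
    simpa [Finset.mem_pi] using fun i _ => (mem_Iic.mp hm) i
  · intro p hp
    rw [mem_Iic]
    intro i
    rw [Finsupp.indicator_apply]
    split_ifs with hi
    · exact mem_Iic.mp (Finset.mem_pi.mp hp i hi)
    · simp
  · intro m hm
    ext i
    rw [Finsupp.indicator_apply]
    split_ifs with hi
    · rfl
    · have := (mem_Iic.mp hm) i
      rw [Finsupp.notMem_support_iff.mp hi] at this
      omega
  · intro p _
    ext i hi
    simp [Finsupp.indicator_of_mem hi]
  · intro m _
    rw [← prod_attach]

lemma sum_Iic_mchoose_mul_pow_mdeg {M : Type*} [CommSemiring M] (ν : ℕ →₀ ℕ) (x : M) :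
    ∑ m ∈ Iic ν, (mchoose ν m : M) * x ^ mdeg m = (1 + x) ^ mdeg ν := by
  have hterm : ∀ m ∈ Iic ν,
      (mchoose ν m : M) * x ^ mdeg m = ∏ j ∈ ν.support, ((ν j).choose (m j) * x ^ m j) := by
    intro m hm
    rw [mchoose, mdeg, Finsupp.sum_of_support_subset m (Finsupp.support_mono (mem_Iic.mp hm)) _
      (fun _ _ => rfl), ← prod_pow_eq_pow_sum, Nat.cast_prod, prod_mul_distrib]
  rw [sum_congr rfl hterm,
    Finsupp.sum_Iic_prod_eq_prod_sum ν fun j k => ((ν j).choose k : M) * x ^ k,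
    mdeg, Finsupp.sum, ← prod_pow_eq_pow_sum]
  refine prod_congr rfl fun j _ => ?_
  rw [add_comm, add_pow, ← Nat.range_succ_eq_Iic]
  exact sum_congr rfl fun k _ => by rw [one_pow, mul_one, mul_comm]

lemma sum_mchoose_of_mdeg_eq (ν : ℕ →₀ ℕ) (i : ℕ) :
    ∑ m ∈ Iic ν with mdeg m = i, mchoose ν m = (mdeg ν).choose i := by
  have := congrArg (Polynomial.coeff · i)
    (sum_Iic_mchoose_mul_pow_mdeg ν (Polynomial.X : Polynomial ℕ))
  simpa [Polynomial.finsetSum_coeff, Polynomial.coeff_one_add_X_pow, Polynomial.coeff_X_pow,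
    sum_filter, eq_comm] using this

lemma sum_Iic_mchoose_mul_comp_mdeg {M : Type*} [NonAssocSemiring M] (ν : ℕ →₀ ℕ) (g : ℕ → M) :
    ∑ m ∈ Iic ν, (mchoose ν m : M) * g (mdeg m)
      = ∑ i ∈ range (mdeg ν + 1), ((mdeg ν).choose i : M) * g i := by
  rw [← sum_fiberwise_of_maps_to (g := mdeg) (t := range (mdeg ν + 1))
    fun m hm => mem_range_succ_iff.mpr (Finsupp.degree_mono (mem_Iic.mp hm))]
  refine sum_congr rfl fun i _ => ?_
  rw [← sum_mchoose_of_mdeg_eq, Nat.cast_sum, sum_mul]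
  exact sum_congr rfl fun m hm => by rw [(mem_filter.mp hm).2]

lemma Bseq_succ_succ (Γ : ℕ → ℝ) {n l : ℕ} (hl : 1 ≤ l) :
    Bseq Γ (n + 1) (l + 1) = ∑ i ∈ Icc l n, (n.choose i : ℝ) * Γ (n - i + 1) * Bseq Γ i l := by
  obtain ⟨k, rfl⟩ := Nat.exists_eq_add_of_le' hl
  rw [Bseq]
  refine sum_congr rfl fun i hi => ?_
  rw [mem_Icc] at hi
  rw [show n + 1 - i = n - i + 1 by omega, Nat.add_sub_cancel]

lemma sum_recursion_eq_Bseq {R : ℝ} {β Γ : ℕ → ℝ} {A : (ℕ →₀ ℕ) → ℕ → ℝ} {l : ℕ} (hl : 1 ≤ l)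
    (hAzero : ∀ m, mdeg m < l → A m l = 0)
    (hAl : ∀ m, l ≤ mdeg m → A m l = R ^ l * bpow β m * Bseq Γ (mdeg m) l)
    (μ : ℕ →₀ ℕ) (j : ℕ) :
    R * ∑ m ∈ Iic μ, (mchoose μ m : ℝ) * bpow β (μ - m + Finsupp.single j 1)
        * Γ (mdeg (μ - m) + 1) * A m l
      = R ^ (l + 1) * bpow β (μ + Finsupp.single j 1) * Bseq Γ (mdeg μ + 1) (l + 1) := by
  set G : ℕ → ℝ := fun i => if l ≤ i then
    R ^ l * bpow β (μ + Finsupp.single j 1) * (Γ (mdeg μ - i + 1) * Bseq Γ i l) else 0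
  have hterm : ∀ m ∈ Iic μ, (mchoose μ m : ℝ) * bpow β (μ - m + Finsupp.single j 1)
      * Γ (mdeg (μ - m) + 1) * A m l = mchoose μ m * G (mdeg m) := by
    intro m hm
    have hmμ := mem_Iic.mp hm
    by_cases h : l ≤ mdeg m
    · simp only [G, if_pos h]
      rw [hAl m h, mdeg_tsub hmμ, ← bpow_tsub_add_mul hmμ]
      ring
    · simp only [G, if_neg h]
      rw [hAzero m (by omega)]
      ring
  rw [sum_congr rfl hterm, sum_Iic_mchoose_mul_comp_mdeg, Bseq_succ_succ Γ hl, mul_sum, mul_sum]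
  simp only [G, mul_ite, mul_zero, ← sum_filter]
  have hfilter : (range (mdeg μ + 1)).filter (l ≤ ·) = Icc l (mdeg μ) := by
    ext i
    simp only [mem_filter, mem_range, mem_Icc]
    omega
  rw [hfilter]
  exact sum_congr rfl fun i _ => by ring

theorem recursion_nonperiodic_general
    (R : ℝ) (β : ℕ → ℝ)
    (Γ : ℕ → ℝ)
    (A : (ℕ →₀ ℕ) → ℕ → ℝ)
    (hA0 : ∀ ν, A ν 0 = if ν = 0 then 1 else 0)
    (hAzero : ∀ ν lam, mdeg ν < lam → A ν lam = 0)
    (hrec : ∀ (ν : ℕ →₀ ℕ) (j : ℕ) (lam : ℕ), 1 ≤ lam → lam ≤ mdeg ν + 1 →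
      A (ν + Finsupp.single j 1) lam
        = R * ∑ m ∈ Finset.Iic ν,
            (mchoose ν m : ℝ) * bpow β (ν - m + Finsupp.single j 1)
              * Γ (mdeg (ν - m) + 1) * A m (lam - 1)) :
    ∀ (ν : ℕ →₀ ℕ) (lam : ℕ), ν ≠ 0 → 1 ≤ lam → lam ≤ mdeg ν →
      A ν lam = R ^ lam * bpow β ν * Bseq Γ (mdeg ν) lam := by
  intro ν lam
  induction lam generalizing ν with
  | zero => intro _ h _; omega
  | succ l IH =>
    intro hν _ hl
    obtain ⟨μ, j, rfl⟩ := Finsupp.exists_eq_add_single_one_of_ne_zero hν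
    have hdeg : mdeg (μ + Finsupp.single j 1) = mdeg μ + 1 := by
      simp [mdeg_eq_degree]
    rw [hdeg] at hl ⊢
    rw [hrec μ j (l + 1) (by omega) (by omega), Nat.add_sub_cancel]
    rcases Nat.eq_zero_or_pos l with rfl | hl1
    · rw [sum_eq_single_of_mem 0 (by simp) fun m _ hm => by rw [hA0, if_neg hm, mul_zero]]
      simp [hA0, mchoose, Bseq, mul_assoc]
    · refine sum_recursion_eq_Bseq hl1 (hAzero · l) (fun m hm => IH m ?_ hl1 hm) μ j
      rintro rfl
      simp [mdeg_eq_degree] at hm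
      omega

/-- Lemma on the sharp recursion for the non-periodic DNN: if `A` satisfies the stated
recursion, then `A(ν,λ) = R^λ β^ν B(|ν|, λ)` for all `ν ≠ 0` and `1 ≤ λ ≤ |ν|`. -/
theorem recursion_nonperiodic
    (R : ℝ) (hR : 0 < R) (β : ℕ → ℝ) (hβ : ∀ j, 0 < β j)
    (Γ : ℕ → ℝ) (hΓ : ∀ n, 0 < Γ n)
    (A : (ℕ →₀ ℕ) → ℕ → ℝ)
    (hAnonneg : ∀ ν lam, 0 ≤ A ν lam)
    (hA0 : ∀ ν, A ν 0 = if ν = 0 then 1 else 0)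
    (hAzero : ∀ ν lam, mdeg ν < lam → A ν lam = 0)
    (hrec : ∀ (ν : ℕ →₀ ℕ) (j : ℕ) (lam : ℕ), 1 ≤ lam → lam ≤ mdeg ν + 1 →
      A (ν + Finsupp.single j 1) lam
        = R * ∑ m ∈ Finset.Iic ν,
            (mchoose ν m : ℝ) * bpow β (ν - m + Finsupp.single j 1)
              * Γ (mdeg (ν - m) + 1) * A m (lam - 1)) :
    ∀ (ν : ℕ →₀ ℕ) (lam : ℕ), ν ≠ 0 → 1 ≤ lam → lam ≤ mdeg ν →
      A ν lam = R ^ lam * bpow β ν * Bseq Γ (mdeg ν) lam :=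
  recursion_nonperiodic_general R β Γ A hA0 hAzero hrec
end

section
/- If |∂^ν F(y)| ≤ C |ν|! b^ν and |∂^ν H(y)| ≤ C |ν|! b^ν for all finitely supported multiindices ν and all y ∈ [0,1]^s, where C > 0 and b = (b_j) is a nonnegative sequence, then the square of the difference satisfies |∂^ν (F(y) − H(y))^2| ≤ 4 C^2 (|ν|+1)! b^ν for all ν and y. -/
open Finset

/-- Partial derivative with respect to the `j`-th input variable. -/
noncomputable def pder {s : ℕ} (j : Fin s) (f : (Fin s → ℝ) → ℝ) : (Fin s → ℝ) → ℝ :=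
  fun y => deriv (fun t => f (Function.update y j t)) (y j)

/-- Mixed partial derivative `∂^ν = ∏_j (∂/∂y_j)^{ν_j}`. -/
noncomputable def mixedDeriv {s : ℕ} (ν : Fin s → ℕ) (f : (Fin s → ℝ) → ℝ) :
    (Fin s → ℝ) → ℝ :=
  (List.ofFn (fun j : Fin s => (pder j)^[ν j])).foldr (· ∘ ·) id f

/-! ### Analytic lemmas about `pder` -/

lemma update_eq_affine {s : ℕ} (y : Fin s → ℝ) (j : Fin s) (t : ℝ) :
    Function.update y j t = y + (t - y j) • (Pi.single j 1 : Fin s → ℝ) := by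
  funext i
  by_cases h : i = j
  · subst h; simp
  · simp [Function.update_of_ne h, Pi.single_eq_of_ne h]

lemma my_hasDerivAt_update {s : ℕ} {f : (Fin s → ℝ) → ℝ} (hf : ContDiff ℝ (⊤ : ℕ∞) f)
    (y : Fin s → ℝ) (j : Fin s) (t₀ : ℝ) :
    HasDerivAt (fun t => f (Function.update y j t))
      (fderiv ℝ f (Function.update y j t₀) (Pi.single j 1)) t₀ := by
  have h1 : HasDerivAt (fun t : ℝ => Function.update y j t) (Pi.single j 1) t₀ := by
    have : HasDerivAt (fun t : ℝ => y + (t - y j) • (Pi.single j 1 : Fin s → ℝ))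
        ((1 - 0) • (Pi.single j 1 : Fin s → ℝ)) t₀ := by
      simpa using (((hasDerivAt_id t₀).sub_const (y j)).smul_const
        (Pi.single j 1 : Fin s → ℝ)).const_add y
    simpa [funext (update_eq_affine y j)] using this
  have h2 := (hf.differentiable (by simp) (Function.update y j t₀)).hasFDerivAt
  exact h2.comp_hasDerivAt t₀ h1

lemma pder_eq_fderiv {s : ℕ} {f : (Fin s → ℝ) → ℝ} (hf : ContDiff ℝ (⊤ : ℕ∞) f) (j : Fin s) :
    pder j f = fun y => fderiv ℝ f y (Pi.single j 1) := by
  funext y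
  have := (my_hasDerivAt_update hf y j (y j)).deriv
  rw [Function.update_eq_self] at this
  simp only [pder]
  rw [this]

lemma ContDiff.pderiv {s : ℕ} {f : (Fin s → ℝ) → ℝ} (hf : ContDiff ℝ (⊤ : ℕ∞) f) (j : Fin s) :
    ContDiff ℝ (⊤ : ℕ∞) (pder j f) := by
  rw [pder_eq_fderiv hf]
  exact (hf.fderiv_right (by simp)).clm_apply contDiff_const

lemma my_hasDerivAt_update' {s : ℕ} {f : (Fin s → ℝ) → ℝ} (hf : ContDiff ℝ (⊤ : ℕ∞) f)
    (y : Fin s → ℝ) (j : Fin s) :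
    HasDerivAt (fun t => f (Function.update y j t)) (pder j f y) (y j) := by
  have := my_hasDerivAt_update hf y j (y j)
  rwa [Function.update_eq_self, ← congrFun (pder_eq_fderiv hf j) y] at this

/-! ### Lists of partial derivatives -/

/-- Apply a list of partial derivatives, head outermost. -/
noncomputable def D {s : ℕ} (l : List (Fin s)) (f : (Fin s → ℝ) → ℝ) : (Fin s → ℝ) → ℝ :=
  l.foldr (fun j acc => pder j acc) f

def bigList {s : ℕ} (ν : Fin s → ℕ) : List (Fin s) :=
  (List.finRange s).flatMap (fun j => List.replicate (ν j) j)

@[simp] lemma D_nil {s : ℕ} (f : (Fin s → ℝ) → ℝ) : D [] f = f := rfl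

@[simp] lemma D_cons {s : ℕ} (a : Fin s) (l : List (Fin s)) (f : (Fin s → ℝ) → ℝ) :
    D (a :: l) f = pder a (D l f) := rfl

lemma D_append {s : ℕ} (l₁ l₂ : List (Fin s)) (f : (Fin s → ℝ) → ℝ) :
    D (l₁ ++ l₂) f = D l₁ (D l₂ f) := by
  simp [D, List.foldr_append]

lemma D_replicate {s : ℕ} (n : ℕ) (j : Fin s) (f : (Fin s → ℝ) → ℝ) :
    D (List.replicate n j) f = (pder j)^[n] f := by
  induction n with
  | zero => rfl
  | succ n ih => rw [List.replicate_succ, D_cons, ih, Function.iterate_succ_apply']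

lemma mixedDeriv_eq_D {s : ℕ} (ν : Fin s → ℕ) (f : (Fin s → ℝ) → ℝ) :
    mixedDeriv ν f = D (bigList ν) f := by
  rw [mixedDeriv, bigList, List.ofFn_eq_map]
  induction (List.finRange s) with
  | nil => rfl
  | cons a L ih => simp [List.foldr_map] at ih ⊢; rw [ih, D_append, D_replicate]

lemma ContDiff.D {s : ℕ} {f : (Fin s → ℝ) → ℝ} (hf : ContDiff ℝ (⊤ : ℕ∞) f) (l : List (Fin s)) :
    ContDiff ℝ (⊤ : ℕ∞) (D l f) := by
  induction l with
  | nil => exact hf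
  | cons a l ih => exact ih.pderiv a

/-! ### Splits of a list -/

def splits {α : Type*} : List α → List (List α × List α)
  | [] => [([], [])]
  | a :: l => (splits l).flatMap (fun p => [(a :: p.1, p.2), (p.1, a :: p.2)])

lemma splits_sublist {α : Type*} {l : List α} {p : List α × List α} (hp : p ∈ splits l) :
    p.1.Sublist l ∧ p.2.Sublist l := by
  induction l generalizing p with
  | nil => simp [splits] at hp; simp [hp]
  | cons a l ih =>
    simp only [splits, List.mem_flatMap] at hp
    obtain ⟨q, hq, hm⟩ := hp
    obtain ⟨h1, h2⟩ := ih hq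
    simp only [List.mem_cons, List.mem_singleton] at hm
    rcases hm with rfl | hm
    · exact ⟨h1.cons₂ a, h2.cons a⟩
    · simp at hm; rcases hm with rfl; exact ⟨h1.cons a, h2.cons₂ a⟩

lemma splits_length {α : Type*} {l : List α} {p : List α × List α} (hp : p ∈ splits l) :
    p.1.length + p.2.length = l.length := by
  induction l generalizing p with
  | nil => simp [splits] at hp; simp [hp]
  | cons a l ih =>
    simp only [splits, List.mem_flatMap] at hp
    obtain ⟨q, hq, hm⟩ := hp
    simp only [List.mem_cons, List.mem_singleton] at hm
    rcases hm with rfl | hm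
    · simp [Nat.succ_add, ih hq]
    · simp at hm; rcases hm with rfl; simp [← ih hq]; omega

lemma splits_map_prod {s : ℕ} (b : Fin s → ℝ) {l : List (Fin s)}
    {p : List (Fin s) × List (Fin s)} (hp : p ∈ splits l) :
    (p.1.map b).prod * (p.2.map b).prod = (l.map b).prod := by
  induction l generalizing p with
  | nil => simp [splits] at hp; simp [hp]
  | cons a l ih =>
    simp only [splits, List.mem_flatMap] at hp
    obtain ⟨q, hq, hm⟩ := hp
    simp only [List.mem_cons, List.mem_singleton] at hm
    rcases hm with rfl | hm
    · simp only [List.map_cons, List.prod_cons, mul_assoc]; rw [ih hq]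
    · simp at hm; rcases hm with rfl
      simp only [List.map_cons, List.prod_cons]
      rw [← ih hq]; ring

lemma splits_factorial_sum {α : Type*} (l : List α) :
    ((splits l).map (fun p => (p.1.length.factorial * p.2.length.factorial : ℕ))).sum
      = (l.length + 1).factorial := by
  induction l with
  | nil => simp [splits]
  | cons a l ih =>
    rw [splits, List.map_flatMap]
    have hfm : ∀ (L : List (List α × List α)) (g : List α × List α → List ℕ),
        (L.flatMap g).sum = (L.map (fun a => (g a).sum)).sum := by
      intro L g
      induction L with
      | nil => rfl
      | cons x L ihL => simp [List.flatMap_cons, ihL]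
    rw [hfm]
    have : ∀ p ∈ splits l,
        (List.map (fun p => (p.1.length.factorial * p.2.length.factorial : ℕ))
          [(a :: p.1, p.2), (p.1, a :: p.2)]).sum
        = (l.length + 2) * (p.1.length.factorial * p.2.length.factorial) := by
      intro p hp
      have hlen := splits_length hp
      simp only [List.map_cons, List.map_nil, List.sum_cons, List.sum_nil, add_zero,
        List.length_cons]
      rw [Nat.factorial_succ, Nat.factorial_succ]
      rw [← hlen]; ring
    rw [List.map_congr_left this]
    have : (List.map (fun p : List α × List α =>
        (l.length + 2) * (p.1.length.factorial * p.2.length.factorial)) (splits l)).sum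
        = (l.length + 2) * ((splits l).map
            (fun p => p.1.length.factorial * p.2.length.factorial)).sum := by
      rw [← List.sum_map_mul_left]
    rw [this, ih]
    simp [List.length_cons, Nat.factorial_succ]

/-! ### Sublists of `bigList` -/

lemma flatMap_congr {α β : Type*} {L : List α} {f g : α → List β}
    (h : ∀ a ∈ L, f a = g a) : L.flatMap f = L.flatMap g := by
  induction L with
  | nil => rfl
  | cons a L ih =>
    simp only [List.flatMap_cons]
    rw [h a (by simp), ih (fun x hx => h x (by simp [hx]))]

lemma sublist_flatMap_replicate {s : ℕ} (ν : Fin s → ℕ) :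
    ∀ (L : List (Fin s)), L.Nodup → ∀ l : List (Fin s),
      l.Sublist (L.flatMap (fun j => List.replicate (ν j) j)) →
      ∃ m : Fin s → ℕ, l = L.flatMap (fun j => List.replicate (m j) j) := by
  intro L
  induction L with
  | nil => intro _ l hl; simp at hl; exact ⟨ν, by simp [hl]⟩
  | cons a L ih =>
    intro hnd l hl
    simp only [List.flatMap_cons] at hl
    rw [List.sublist_append_iff] at hl
    obtain ⟨l₁, l₂, rfl, h₁, h₂⟩ := hl
    rw [List.sublist_replicate_iff] at h₁
    obtain ⟨k, hk, rfl⟩ := h₁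
    obtain ⟨m', hm'⟩ := ih (List.nodup_cons.mp hnd).2 l₂ h₂
    refine ⟨Function.update m' a k, ?_⟩
    have ha : a ∉ L := (List.nodup_cons.mp hnd).1
    rw [List.flatMap_cons, Function.update_self]
    congr 1
    rw [hm']
    refine flatMap_congr (fun j hj => ?_)
    have : j ≠ a := fun h => ha (h ▸ hj)
    rw [Function.update_of_ne this]

lemma sublist_bigList {s : ℕ} {ν : Fin s → ℕ} {l : List (Fin s)}
    (hl : l.Sublist (bigList ν)) : ∃ m : Fin s → ℕ, l = bigList m :=
  sublist_flatMap_replicate ν (List.finRange s) (List.nodup_finRange s) l hl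

lemma bigList_length {s : ℕ} (m : Fin s → ℕ) : (bigList m).length = ∑ j, m j := by
  rw [bigList, List.length_flatMap, Fin.sum_univ_def]
  congr 1
  simp [Function.comp]

lemma prod_flatMap {α β M : Type*} [CommMonoid M] (h : β → M) (L : List α) (f : α → List β) :
    ((L.flatMap f).map h).prod = (L.map (fun a => ((f a).map h).prod)).prod := by
  induction L with
  | nil => rfl
  | cons a L ih => simp [List.flatMap_cons, ih]

lemma bigList_prod {s : ℕ} (b : Fin s → ℝ) (m : Fin s → ℕ) :
    ((bigList m).map b).prod = ∏ j, b j ^ m j := by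
  rw [bigList, prod_flatMap, Fin.prod_univ_def]
  congr 1
  apply List.map_congr_left
  intro j _
  simp

/-! ### The Leibniz rule for `D` -/

lemma hasDerivAt_list_sum {ι : Type*} (L : List ι) (u : ι → ℝ → ℝ) (u' : ι → ℝ) (t : ℝ)
    (h : ∀ i ∈ L, HasDerivAt (u i) (u' i) t) :
    HasDerivAt (fun t => (L.map (fun i => u i t)).sum) ((L.map u').sum) t := by
  induction L with
  | nil => simpa using hasDerivAt_const t (0 : ℝ)
  | cons a L ih =>
    simp only [List.map_cons, List.sum_cons]
    exact (h a (by simp)).add (ih (fun i hi => h i (by simp [hi])))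

lemma D_sub {s : ℕ} {f g : (Fin s → ℝ) → ℝ} (hf : ContDiff ℝ (⊤ : ℕ∞) f) (hg : ContDiff ℝ (⊤ : ℕ∞) g)
    (l : List (Fin s)) : D l (fun y => f y - g y) = fun y => D l f y - D l g y := by
  induction l with
  | nil => rfl
  | cons a l ih =>
    rw [D_cons, ih]
    funext y
    have h1 := my_hasDerivAt_update' (hf.D l) y a
    have h2 := my_hasDerivAt_update' (hg.D l) y a
    have := (h1.sub h2).deriv
    exact this

lemma D_mul {s : ℕ} {f g : (Fin s → ℝ) → ℝ} (hf : ContDiff ℝ (⊤ : ℕ∞) f) (hg : ContDiff ℝ (⊤ : ℕ∞) g)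
    (l : List (Fin s)) :
    D l (fun y => f y * g y)
      = fun y => ((splits l).map (fun p => D p.1 f y * D p.2 g y)).sum := by
  induction l with
  | nil => simp [splits]
  | cons a l ih =>
    rw [D_cons, ih]
    funext y
    have hterm : ∀ p ∈ splits l,
        HasDerivAt (fun t => D p.1 f (Function.update y a t) * D p.2 g (Function.update y a t))
          (pder a (D p.1 f) y * D p.2 g y + D p.1 f y * pder a (D p.2 g) y) (y a) :=
      fun p _ => by
        have := (my_hasDerivAt_update' (hf.D p.1) y a).mul (my_hasDerivAt_update' (hg.D p.2) y a)
        simp only [Function.update_eq_self] at this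
        exact this
    have hsum := hasDerivAt_list_sum (splits l)
      (fun p t => D p.1 f (Function.update y a t) * D p.2 g (Function.update y a t))
      (fun p => pder a (D p.1 f) y * D p.2 g y + D p.1 f y * pder a (D p.2 g) y)
      (y a) hterm
    have hval : pder a (fun y => ((splits l).map (fun p => D p.1 f y * D p.2 g y)).sum) y
        = ((splits l).map
            (fun p => pder a (D p.1 f) y * D p.2 g y + D p.1 f y * pder a (D p.2 g) y)).sum := by
      simp only [pder]
      exact hsum.deriv
    rw [hval, splits]
    have hfm : ∀ (L : List (List (Fin s) × List (Fin s)))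
        (r : List (Fin s) × List (Fin s) → List (List (Fin s) × List (Fin s)))
        (h : List (Fin s) × List (Fin s) → ℝ),
        ((L.flatMap r).map h).sum = (L.map (fun q => ((r q).map h).sum)).sum := by
      intro L r h
      induction L with
      | nil => rfl
      | cons x L ihL => simp [List.flatMap_cons, ihL]
    rw [hfm]
    refine congrArg List.sum (List.map_congr_left fun p _ => ?_)
    simp [D_cons]

lemma list_abs_sum_le {ι : Type*} (L : List ι) (h : ι → ℝ) :
    |(L.map h).sum| ≤ (L.map (fun i => |h i|)).sum := by
  induction L with
  | nil => simp
  | cons a L ih =>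
    simp only [List.map_cons, List.sum_cons]
    exact (abs_add_le _ _).trans (by linarith)

/-- If `F` and `H` both satisfy `|∂^ν ·| ≤ C |ν|! b^ν` on the unit cube, then the square
of their difference satisfies `|∂^ν (F−H)^2| ≤ 4 C² (|ν|+1)! b^ν` there. -/
theorem squared_difference_derivative_bound
    {s : ℕ} (F H : (Fin s → ℝ) → ℝ)
    (hF : ContDiff ℝ (⊤ : ℕ∞) F) (hH : ContDiff ℝ (⊤ : ℕ∞) H)
    (C : ℝ) (hC : 0 < C) (b : Fin s → ℝ) (hb : ∀ j, 0 ≤ b j)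
    (hFbound : ∀ (ν : Fin s → ℕ) (y : Fin s → ℝ), (∀ j, y j ∈ Set.Icc (0 : ℝ) 1) →
      |mixedDeriv ν F y| ≤ C * ((∑ j, ν j).factorial : ℝ) * ∏ j, b j ^ ν j)
    (hHbound : ∀ (ν : Fin s → ℕ) (y : Fin s → ℝ), (∀ j, y j ∈ Set.Icc (0 : ℝ) 1) →
      |mixedDeriv ν H y| ≤ C * ((∑ j, ν j).factorial : ℝ) * ∏ j, b j ^ ν j) :
    ∀ (ν : Fin s → ℕ) (y : Fin s → ℝ), (∀ j, y j ∈ Set.Icc (0 : ℝ) 1) →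
      |mixedDeriv ν (fun y => (F y - H y) ^ 2) y|
        ≤ 4 * C ^ 2 * (((∑ j, ν j) + 1).factorial : ℝ) * ∏ j, b j ^ ν j := by
  intro ν y hy
  set G : (Fin s → ℝ) → ℝ := fun y => F y - H y with hGdef
  have hG : ContDiff ℝ (⊤ : ℕ∞) G := hF.sub hH
  -- bound on derivatives of G along sublists of bigList ν
  have hDG : ∀ l : List (Fin s), l.Sublist (bigList ν) →
      |D l G y| ≤ 2 * C * (l.length.factorial : ℝ) * (l.map b).prod := by
    intro l hl
    obtain ⟨m, rfl⟩ := sublist_bigList hl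
    have hDsub : D (bigList m) G y = D (bigList m) F y - D (bigList m) H y :=
      congrFun (D_sub hF hH (bigList m)) y
    have hFm := hFbound m y hy
    have hHm := hHbound m y hy
    rw [mixedDeriv_eq_D] at hFm hHm
    rw [bigList_length, bigList_prod, hDsub]
    calc |D (bigList m) F y - D (bigList m) H y|
        ≤ |D (bigList m) F y| + |D (bigList m) H y| := abs_sub _ _
      _ ≤ 2 * C * ((∑ j, m j).factorial : ℝ) * ∏ j, b j ^ m j := by linarith
  -- rewrite the square as a product and expand by Leibniz
  have hsq : (fun y => (F y - H y) ^ 2) = fun y => G y * G y := by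
    funext z; rw [hGdef]; ring
  rw [hsq, mixedDeriv_eq_D, D_mul hG hG]
  set l := bigList ν with hl
  have hn : l.length = ∑ j, ν j := bigList_length ν
  have hbν : (l.map b).prod = ∏ j, b j ^ ν j := bigList_prod b ν
  -- pointwise bounds on the terms of the Leibniz sum
  have hterm : ∀ p ∈ splits l,
      |D p.1 G y * D p.2 G y|
        ≤ 4 * C ^ 2 * ((p.1.length.factorial * p.2.length.factorial : ℕ) : ℝ)
            * ∏ j, b j ^ ν j := by
    intro p hp
    obtain ⟨hp1, hp2⟩ := splits_sublist hp
    have h1 := hDG p.1 hp1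
    have h2 := hDG p.2 hp2
    have hprod := splits_map_prod b hp
    have hb1 : (0:ℝ) ≤ (p.1.map b).prod :=
      List.prod_nonneg (by intro x hx; simp only [List.mem_map] at hx
                           obtain ⟨j, _, rfl⟩ := hx; exact hb j)
    have hb2 : (0:ℝ) ≤ (p.2.map b).prod :=
      List.prod_nonneg (by intro x hx; simp only [List.mem_map] at hx
                           obtain ⟨j, _, rfl⟩ := hx; exact hb j)
    calc |D p.1 G y * D p.2 G y| = |D p.1 G y| * |D p.2 G y| := abs_mul _ _
      _ ≤ (2 * C * (p.1.length.factorial : ℝ) * (p.1.map b).prod)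
            * (2 * C * (p.2.length.factorial : ℝ) * (p.2.map b).prod) := by
          apply mul_le_mul h1 h2 (abs_nonneg _)
          positivity
      _ = 4 * C ^ 2 * ((p.1.length.factorial * p.2.length.factorial : ℕ) : ℝ)
            * ((p.1.map b).prod * (p.2.map b).prod) := by push_cast; ring
      _ = _ := by rw [hprod, hbν]
  -- sum up
  calc |((splits l).map (fun p => D p.1 G y * D p.2 G y)).sum|
      ≤ ((splits l).map (fun p => |D p.1 G y * D p.2 G y|)).sum :=
        list_abs_sum_le _ _
    _ ≤ ((splits l).map (fun p =>
          4 * C ^ 2 * ((p.1.length.factorial * p.2.length.factorial : ℕ) : ℝ)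
            * ∏ j, b j ^ ν j)).sum := by
        apply List.sum_le_sum
        intro p hp
        exact hterm p hp
    _ = 4 * C ^ 2 * (((l.length + 1).factorial : ℕ) : ℝ) * ∏ j, b j ^ ν j := by
        have : ∀ p : List (Fin s) × List (Fin s),
            4 * C ^ 2 * ((p.1.length.factorial * p.2.length.factorial : ℕ) : ℝ)
              * ∏ j, b j ^ ν j
            = (4 * C ^ 2 * ∏ j, b j ^ ν j)
              * ((p.1.length.factorial * p.2.length.factorial : ℕ) : ℝ) := by
          intro p; ring
        simp only [this]
        rw [List.sum_map_mul_left]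
        have hcast : (List.map (fun p : List (Fin s) × List (Fin s) =>
            ((p.1.length.factorial * p.2.length.factorial : ℕ) : ℝ)) (splits l)).sum
            = ((((splits l).map (fun p =>
                p.1.length.factorial * p.2.length.factorial)).sum : ℕ) : ℝ) := by
          rw [Nat.cast_list_sum, List.map_map]
          rfl
        rw [hcast, splits_factorial_sum]
        ring
    _ = 4 * C ^ 2 * (((∑ j, ν j) + 1).factorial : ℝ) * ∏ j, b j ^ ν j := by rw [hn]
end
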